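/- arXiv:0804.1935 — 2 statements merged into one kernel-verified Lean document; each statement's English description precedes it below -/
import Mathlib

section
/- For a down-up alternating permutation σ of [n], the number of alternating inversions satisfies î(σ) ≥ ⌊n²/4⌋, with the minimum ⌊n²/4⌋ attained, and the number of down-up alternating permutations of [n] achieving î(σ) = ⌊n²/4⌋ is the Catalan number c_{⌊n/2⌋}. -/
open Finset
open scoped Classical

/-- entry of a permutation of `Fin n` at 0-indexed position `i` (0-based values). -/
def ent {n : ℕ} (σ : Equiv.Perm (Fin n)) (i : ℕ) : ℕ :=
  if h : i < n then (σ ⟨i, h⟩ : ℕ) else 0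

/-- the triple `(a, b, c)` of distinct values, reduced to a permutation in `S₃`, is odd. -/
def odd3 (a b c : ℕ) : Prop :=
  ((if b < a then 1 else 0) + (if c < a then 1 else 0) + (if c < b then 1 else 0)) % 2 = 1

instance (a b c : ℕ) : Decidable (odd3 a b c) := by
  unfold odd3; infer_instance

/-- 3-descent set, 0-indexed positions (position `i` here is paper position `i+1`). -/
def D3 {n : ℕ} (σ : Equiv.Perm (Fin n)) : Finset ℕ :=
  (Finset.range (n - 2)).filter (fun i => odd3 (ent σ i) (ent σ (i + 1)) (ent σ (i + 2)))

/-- alternating descent set, 0-indexed positions. -/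
def altD {n : ℕ} (σ : Equiv.Perm (Fin n)) : Finset ℕ :=
  (Finset.range (n - 1)).filter (fun i =>
    (Even i ∧ ent σ (i + 1) < ent σ i) ∨ (¬ Even i ∧ ent σ i < ent σ (i + 1)))

/-- number of up-down alternating permutations of `[n]` (the Euler number `Eₙ`). -/
noncomputable def EulerNum (n : ℕ) : ℕ :=
  ((Finset.univ : Finset (Equiv.Perm (Fin n))).filter (fun τ =>
    ∀ i ∈ Finset.range (n - 1),
      (Even i ∧ ent τ i < ent τ (i + 1)) ∨ (¬ Even i ∧ ent τ (i + 1) < ent τ i))).card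

/-- `c³ᵢ(σ)`, 0-indexed: number of `j > i+1` with `σᵢ σᵢ₊₁ σⱼ` odd. -/
def c3 {n : ℕ} (σ : Equiv.Perm (Fin n)) (i : ℕ) : ℕ :=
  ((Finset.range n).filter (fun j => i + 1 < j ∧ odd3 (ent σ i) (ent σ (i + 1)) (ent σ j))).card

/-- `ĉᵢ(σ)`, 0-indexed. -/
def chat {n : ℕ} (σ : Equiv.Perm (Fin n)) (i : ℕ) : ℕ :=
  ((Finset.range n).filter (fun j => i < j ∧
    ((Even i ∧ ent σ j < ent σ i) ∨ (¬ Even i ∧ ent σ i < ent σ j)))).card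

/-- `i₃` of an arbitrary word `f 0, f 1, ..., f (m-1)`. -/
def i3f (m : ℕ) (f : ℕ → ℕ) : ℕ :=
  ((Finset.range m ×ˢ Finset.range m).filter (fun p =>
    p.1 + 1 < p.2 ∧ odd3 (f p.1) (f (p.1 + 1)) (f p.2))).card

/-- the 3-inversion statistic `i₃`. -/
def i3 {n : ℕ} (σ : Equiv.Perm (Fin n)) : ℕ := i3f n (ent σ)

/-- the word `1*σ` (0-based values): `0, σ₀+1, σ₁+1, ...`. -/
def oneStar {n : ℕ} (σ : Equiv.Perm (Fin n)) : ℕ → ℕ :=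
  fun i => if i = 0 then 0 else ent σ (i - 1) + 1

/-- number of alternating inversions `î(σ)`. -/
def altInv {n : ℕ} (σ : Equiv.Perm (Fin n)) : ℕ :=
  ((Finset.range n ×ˢ Finset.range n).filter (fun p => p.1 < p.2 ∧
    ((Even p.1 ∧ ent σ p.2 < ent σ p.1) ∨ (¬ Even p.1 ∧ ent σ p.1 < ent σ p.2)))).card

/-- number of inversions of the word `f 0, ..., f (m-1)`. -/
def invf (m : ℕ) (f : ℕ → ℕ) : ℕ :=
  ((Finset.range m ×ˢ Finset.range m).filter (fun p => p.1 < p.2 ∧ f p.2 < f p.1)).card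

/-- major index of the word `f 0, ..., f (m-1)` (descent at 0-indexed `i` contributes `i+1`). -/
def majf (m : ℕ) (f : ℕ → ℕ) : ℕ :=
  ∑ i ∈ (Finset.range (m - 1)).filter (fun i => f (i + 1) < f i), (i + 1)

/-- `Â(m, r)`: number of permutations of `[m]` with `r - 1` alternating descents. -/
def Ahat (m r : ℕ) : ℕ :=
  ((Finset.univ : Finset (Equiv.Perm (Fin m))).filter (fun σ => (altD σ).card + 1 = r)).card

/-- down-up alternating: `σ₁ > σ₂ < σ₃ > ⋯`. -/
def DownUp {n : ℕ} (σ : Equiv.Perm (Fin n)) : Prop :=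
  ∀ i ∈ Finset.range (n - 1),
    (Even i ∧ ent σ (i + 1) < ent σ i) ∨ (¬ Even i ∧ ent σ i < ent σ (i + 1))

instance {n : ℕ} (σ : Equiv.Perm (Fin n)) : Decidable (DownUp σ) := by
  unfold DownUp; infer_instance

/-- up-down alternating: `σ₁ < σ₂ > σ₃ < ⋯`. -/
def UpDown {n : ℕ} (σ : Equiv.Perm (Fin n)) : Prop :=
  ∀ i ∈ Finset.range (n - 1),
    (Even i ∧ ent σ i < ent σ (i + 1)) ∨ (¬ Even i ∧ ent σ (i + 1) < ent σ i)

/-!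
Pair each peak `σ (2k)` with the valley `σ (2k+1)` after it (positions are 0-indexed). For
`j > 2k + 1` exactly one of `(2k, j)`, `(2k+1, j)` is an alternating inversion, unless `σ j` lies
strictly between the valley and the peak, when both are; together with `(2k, 2k+1)` this gives
`î(σ) = ⌊n²/4⌋ + #(later entries between a valley and its peak)`. So the minimisers are the down-up
permutations with no later entry inside a peak-valley pair.

For such `σ` of length `2m`, read the values in increasing order and write `U` for a valley and
`D` for a peak. Every peak exceeds the valley after it, so this is a Dyck word. It determines `σ`:
the peaks increase, so the `k`-th peak is the least peak value not used before, and the `k`-th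
valley is the greatest valley value below it not used before. Conversely `U p D q` is realised by
placing the pair `(2a + 1, 0)` between the permutations of `p` (shifted up by one) and of `q`
(shifted above `2a + 1`). In odd length the largest value is the last entry and can be removed.
-/

open Equiv

variable {n : ℕ} {σ : Perm (Fin n)}

lemma ent_lt (σ : Perm (Fin n)) {i : ℕ} (h : i < n) : ent σ i < n := by
  rw [ent, dif_pos h]; exact (σ ⟨i, h⟩).isLt

lemma ent_inj (σ : Perm (Fin n)) {i j : ℕ} (hi : i < n) (hj : j < n)
    (h : ent σ i = ent σ j) : i = j := by
  rw [ent, dif_pos hi, ent, dif_pos hj] at h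
  exact congrArg Fin.val (σ.injective (Fin.ext h))

lemma ent_inv_ent (σ : Perm (Fin n)) {i : ℕ} (h : i < n) : ent σ⁻¹ (ent σ i) = i := by
  simp [ent, h]

lemma ent_ent_inv (σ : Perm (Fin n)) {v : ℕ} (h : v < n) : ent σ (ent σ⁻¹ v) = v := by
  simpa using ent_inv_ent σ⁻¹ h

lemma perm_ext_ent {σ τ : Perm (Fin n)} (h : ∀ i < n, ent σ i = ent τ i) : σ = τ := by
  ext x
  simpa [ent] using h x x.isLt

namespace DownUp

lemma valley_lt_peak (hd : DownUp σ) {k : ℕ} (h : 2 * k + 1 < n) :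
    ent σ (2 * k + 1) < ent σ (2 * k) := by
  rcases hd (2 * k) (mem_range.mpr (by omega)) with ⟨-, hlt⟩ | ⟨hodd, -⟩
  · exact hlt
  · exact absurd (even_two_mul k) hodd

lemma valley_lt_next_peak (hd : DownUp σ) {k : ℕ} (h : 2 * k + 2 < n) :
    ent σ (2 * k + 1) < ent σ (2 * k + 2) := by
  rcases hd (2 * k + 1) (mem_range.mpr (by omega)) with ⟨heven, -⟩ | ⟨-, hlt⟩
  · exact absurd heven (by simp [parity_simps])
  · exact hlt

lemma of_pairs
    (hpeak : ∀ k, 2 * k + 1 < n → ent σ (2 * k + 1) < ent σ (2 * k))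
    (hnext : ∀ k, 2 * k + 2 < n → ent σ (2 * k + 1) < ent σ (2 * k + 2)) : DownUp σ := by
  intro i hi
  simp only [mem_range] at hi
  obtain ⟨k, rfl | rfl⟩ := Nat.even_or_odd' i
  · exact Or.inl ⟨even_two_mul k, hpeak k (by omega)⟩
  · exact Or.inr ⟨by simp [parity_simps], hnext k (by omega)⟩

end DownUp

def pairExcess (σ : Perm (Fin n)) (k : ℕ) : ℕ :=
  #{j ∈ range n | 2 * k + 1 < j ∧ ent σ (2 * k + 1) < ent σ j ∧ ent σ j < ent σ (2 * k)}

def NoLaterEntryBetween (σ : Perm (Fin n)) : Prop :=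
  ∀ k j, 2 * k + 1 < j → j < n → ¬(ent σ (2 * k + 1) < ent σ j ∧ ent σ j < ent σ (2 * k))

lemma altInv_eq_sum_chat (σ : Perm (Fin n)) : altInv σ = ∑ i ∈ range n, chat σ i := by
  rw [altInv, card_filter, sum_product]
  exact sum_congr rfl fun i _ => by rw [chat, card_filter]

lemma chat_eq_zero_of_le (σ : Perm (Fin n)) {i : ℕ} (h : n ≤ i + 1) : chat σ i = 0 := by
  rw [chat, card_eq_zero, filter_eq_empty_iff]
  intro j hj
  simp only [mem_range] at hj
  omega

lemma chat_add_chat_succ (hd : DownUp σ) {k : ℕ} (h : 2 * k < n) :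
    chat σ (2 * k) + chat σ (2 * k + 1) = (n - (2 * k + 1)) + pairExcess σ k := by
  have hodd : ¬Even (2 * k + 1) := by simp [parity_simps]
  have hlater : n - (2 * k + 1) = #{j ∈ range n | 2 * k + 1 ≤ j} := by
    rw [← Nat.card_Ico]; congr 1; ext j; simp [and_comm]
  rw [hlater, chat, chat, pairExcess]
  simp only [card_filter, ← sum_add_distrib, even_two_mul, hodd, true_and, false_and,
    not_true_eq_false, or_false, false_or, not_false_eq_true]
  refine sum_congr rfl fun j hj => ?_
  have hj : j < n := mem_range.mp hj
  rcases lt_or_ge (2 * k + 1) j with hkj | hjk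
  · have hvp := hd.valley_lt_peak (k := k) (by omega)
    have h0 : ent σ j ≠ ent σ (2 * k) := fun he => by have := ent_inj σ hj h he; omega
    have h1 : ent σ j ≠ ent σ (2 * k + 1) := fun he => by
      have := ent_inj σ hj (by omega) he; omega
    split_ifs <;> omega
  · rcases eq_or_lt_of_le hjk with rfl | hjk
    · have := hd.valley_lt_peak (k := k) hj
      split_ifs <;> omega
    · split_ifs <;> omega

lemma sum_range_two_mul (f : ℕ → ℕ) (K : ℕ) :
    ∑ i ∈ range (2 * K), f i = ∑ k ∈ range K, (f (2 * k) + f (2 * k + 1)) := by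
  induction K with
  | zero => simp
  | succ K ih => rw [Nat.mul_succ, sum_range_succ, sum_range_succ, sum_range_succ, ih, add_assoc]

lemma sum_range_half_sub_odd (n : ℕ) :
    ∑ k ∈ range ((n + 1) / 2), (n - (2 * k + 1)) = n ^ 2 / 4 := by
  induction n using Nat.strong_induction_on with
  | _ n ih =>
    match n with
    | 0 | 1 => simp
    | n + 2 =>
      rw [show (n + 2 + 1) / 2 = (n + 1) / 2 + 1 by omega, sum_range_succ']
      simp only [show ∀ k, n + 2 - (2 * (k + 1) + 1) = n - (2 * k + 1) by omega]
      rw [ih n (by omega), show (n + 2) ^ 2 = n ^ 2 + (n + 1) * 4 by ring,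
        Nat.add_mul_div_right _ _ (by norm_num)]
      omega

theorem altInv_eq_of_downUp (hd : DownUp σ) :
    altInv σ = n ^ 2 / 4 + ∑ k ∈ range ((n + 1) / 2), pairExcess σ k := by
  have hpad : ∑ i ∈ range n, chat σ i = ∑ i ∈ range (2 * ((n + 1) / 2)), chat σ i :=
    sum_subset (by intro i; simp only [mem_range]; omega) fun i _ hi =>
      chat_eq_zero_of_le σ (by simp only [mem_range] at hi; omega)
  rw [altInv_eq_sum_chat, hpad, sum_range_two_mul,
    sum_congr rfl fun k hk => chat_add_chat_succ hd (by simp only [mem_range] at hk; omega),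
    sum_add_distrib, sum_range_half_sub_odd]

theorem altInv_eq_sq_div_four_iff (hd : DownUp σ) :
    altInv σ = n ^ 2 / 4 ↔ NoLaterEntryBetween σ := by
  simp only [altInv_eq_of_downUp hd, Nat.add_eq_left, sum_eq_zero_iff, mem_range, pairExcess,
    card_eq_zero, filter_eq_empty_iff, NoLaterEntryBetween]
  exact ⟨fun h k j hkj hj hb => h k (by omega) hj ⟨hkj, hb⟩,
    fun h k _ j hj hb => h k j hb.1 hj hb.2⟩

def IsMinimalDownUp (σ : Perm (Fin n)) : Prop := DownUp σ ∧ NoLaterEntryBetween σ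

lemma downUp_and_altInv_eq_iff : DownUp σ ∧ altInv σ = n ^ 2 / 4 ↔ IsMinimalDownUp σ :=
  and_congr_right altInv_eq_sq_div_four_iff

lemma IsMinimalDownUp.ent_last {m : ℕ} {σ : Perm (Fin (2 * m + 1))} (hσ : IsMinimalDownUp σ) :
    ent σ (2 * m) = 2 * m := by
  have hmax : 2 * m < 2 * m + 1 := by omega
  set i := ent σ⁻¹ (2 * m)
  have hi : i < 2 * m + 1 := ent_lt _ hmax
  have hσi : ent σ i = 2 * m := ent_ent_inv σ hmax
  suffices i = 2 * m by rwa [this] at hσi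
  by_contra hne
  obtain ⟨k, hk | hk⟩ := Nat.even_or_odd' i
  · -- `σ (2k+2)` would lie between the valley `σ (2k+1)` and the maximal peak `σ (2k)`
    rw [hk] at hσi
    have hnext := ent_lt σ (i := 2 * k + 2) (by omega)
    have hne' : ent σ (2 * k + 2) ≠ 2 * m := fun h =>
      absurd (ent_inj σ (by omega) (by omega) (h.trans hσi.symm)) (by omega)
    exact hσ.2 k (2 * k + 2) (by omega) (by omega)
      ⟨hσ.1.valley_lt_next_peak (by omega), by omega⟩
  · rw [hk] at hσi
    have := hσ.1.valley_lt_next_peak (k := k) (by omega)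
    have := ent_lt σ (i := 2 * k + 2) (by omega)
    omega

noncomputable def restrictLast (σ : Perm (Fin (n + 1))) (h : ent σ n = n) : Perm (Fin n) :=
  Equiv.ofBijective
    (fun i => ⟨ent σ i, by
      have hne : ent σ i ≠ n := fun he => absurd (ent_inj σ (by omega) (by omega) (he.trans h.symm))
        (by omega)
      have := ent_lt σ (i := i) (by omega)
      omega⟩)
    (Finite.injective_iff_bijective.mp fun i j hij =>
      Fin.ext (ent_inj σ (by omega) (by omega) (Fin.mk.inj hij)))

lemma ent_restrictLast (σ : Perm (Fin (n + 1))) (h : ent σ n = n) {i : ℕ} (hi : i < n) :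
    ent (restrictLast σ h) i = ent σ i := by
  rw [ent, dif_pos hi, restrictLast, Equiv.ofBijective_apply]

def extendLast (τ : Perm (Fin n)) : Perm (Fin (n + 1)) :=
  τ.viaFintypeEmbedding Fin.castSuccEmb

lemma ent_extendLast (τ : Perm (Fin n)) {i : ℕ} (hi : i < n) :
    ent (extendLast τ) i = ent τ i := by
  have := τ.viaFintypeEmbedding_apply_image Fin.castSuccEmb ⟨i, hi⟩
  rw [ent, dif_pos (by omega), ent, dif_pos hi]
  exact congrArg Fin.val this

lemma ent_extendLast_self (τ : Perm (Fin n)) : ent (extendLast τ) n = n := by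
  have := τ.viaFintypeEmbedding_apply_notMem_range (f := Fin.castSuccEmb) (b := Fin.last n)
    (by simp [Fin.range_castSucc])
  rw [ent, dif_pos n.lt_succ_self]
  exact congrArg Fin.val this

lemma IsMinimalDownUp.restrictLast {σ : Perm (Fin (n + 1))} (hσ : IsMinimalDownUp σ)
    (h : ent σ n = n) : IsMinimalDownUp (restrictLast σ h) := by
  refine ⟨fun i hi => ?_, fun k j hkj hj => ?_⟩
  · simp only [mem_range] at hi
    rw [ent_restrictLast σ h (by omega), ent_restrictLast σ h (by omega)]
    exact hσ.1 i (mem_range.mpr (by omega))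
  · rw [ent_restrictLast σ h (by omega), ent_restrictLast σ h hj,
      ent_restrictLast σ h (by omega)]
    exact hσ.2 k j hkj (by omega)

lemma IsMinimalDownUp.extendLast {m : ℕ} {τ : Perm (Fin (2 * m))} (hτ : IsMinimalDownUp τ) :
    IsMinimalDownUp (extendLast τ) := by
  have hτlt := fun i (hi : i < 2 * m) => ent_lt τ hi
  refine ⟨fun i hi => ?_, fun k j hkj hj => ?_⟩
  · simp only [mem_range] at hi
    rw [ent_extendLast τ (i := i) (by omega)]
    rcases lt_or_ge (i + 1) (2 * m) with hi' | hi'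
    · rw [ent_extendLast τ hi']
      exact hτ.1 i (mem_range.mpr (by omega))
    · -- the last position `2m - 1` of `τ` is a valley, below the new maximal peak
      rw [show i + 1 = 2 * m by omega, ent_extendLast_self]
      exact Or.inr ⟨by rw [Nat.not_even_iff_odd]; exact ⟨m - 1, by omega⟩, hτlt i (by omega)⟩
  · rw [ent_extendLast τ (i := 2 * k + 1) (by omega), ent_extendLast τ (i := 2 * k) (by omega)]
    rcases lt_or_ge j (2 * m) with hj' | hj'
    · rw [ent_extendLast τ hj']
      exact hτ.2 k j hkj hj'
    · rw [show j = 2 * m by omega, ent_extendLast_self]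
      have := hτlt (2 * k) (by omega)
      omega

lemma card_isMinimalDownUp_odd (m : ℕ) :
    #{σ : Perm (Fin (2 * m + 1)) | IsMinimalDownUp σ} =
      #{τ : Perm (Fin (2 * m)) | IsMinimalDownUp τ} := by
  refine card_bij' (fun σ hσ => restrictLast σ (mem_filter.mp hσ).2.ent_last)
    (fun τ _ => extendLast τ) (fun σ hσ => ?_) (fun τ hτ => ?_) (fun σ hσ => ?_) (fun τ hτ => ?_)
  · simpa using (mem_filter.mp hσ).2.restrictLast _
  · simpa using (mem_filter.mp hτ).2.extendLast
  · refine perm_ext_ent fun i hi => ?_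
    rcases lt_or_ge i (2 * m) with hi' | hi'
    · rw [ent_extendLast _ hi', ent_restrictLast _ _ hi']
    · rw [show i = 2 * m by omega, ent_extendLast_self, (mem_filter.mp hσ).2.ent_last]
  · exact perm_ext_ent fun i hi => by rw [ent_restrictLast _ _ hi, ent_extendLast _ hi]

open DyckStep

def stepOf (σ : Perm (Fin n)) (v : ℕ) : DyckStep := if Odd (ent σ⁻¹ v) then U else D

def stepWord (σ : Perm (Fin n)) : List DyckStep := (List.range n).map (stepOf σ)

lemma count_take_stepWord (σ : Perm (Fin n)) (s : DyckStep) {i : ℕ} (hi : i ≤ n) :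
    ((stepWord σ).take i).count s = #{v ∈ range i | stepOf σ v = s} := by
  rw [stepWord, ← List.map_take, List.take_range, min_eq_left hi, List.count_eq_countP,
    List.countP_map, ← Nat.count_eq_card_filter_range, Nat.count]
  rfl

lemma stepOf_eq_U {σ : Perm (Fin n)} {v : ℕ} : stepOf σ v = U ↔ Odd (ent σ⁻¹ v) := by
  unfold stepOf; split_ifs with h <;> simp [h]

lemma stepOf_eq_D {σ : Perm (Fin n)} {v : ℕ} : stepOf σ v = D ↔ ¬Odd (ent σ⁻¹ v) := by
  unfold stepOf; split_ifs with h <;> simp [h]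

lemma card_filter_ent_inv (σ : Perm (Fin n)) (q : ℕ → Prop) [DecidablePred q] :
    #{v ∈ range n | q (ent σ⁻¹ v)} = #{i ∈ range n | q i} := by
  refine card_nbij' (ent σ⁻¹) (ent σ) (fun v hv => ?_) (fun i hi => ?_) (fun v hv => ?_)
    (fun i hi => ?_)
  · simp only [coe_filter, mem_range] at hv ⊢
    exact ⟨ent_lt _ hv.1, hv.2⟩
  · simp only [coe_filter, mem_range] at hi ⊢
    exact ⟨ent_lt _ hi.1, by rw [ent_inv_ent σ hi.1]; exact hi.2⟩
  · simp only [coe_filter, mem_range] at hv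
    exact ent_ent_inv σ hv.1
  · simp only [coe_filter, mem_range] at hi
    exact ent_inv_ent σ hi.1

lemma card_filter_odd_range_two_mul (m : ℕ) : #{i ∈ range (2 * m) | Odd i} = m := by
  induction m with
  | zero => simp
  | succ m ih =>
    rw [Nat.mul_succ, range_add_one, filter_insert, if_pos ⟨m, by omega⟩,
      card_insert_of_notMem (by simp), range_add_one, filter_insert,
      if_neg (by simp [parity_simps]), ih]

lemma count_stepWord {m : ℕ} (σ : Perm (Fin (2 * m))) (s : DyckStep) :
    (stepWord σ).count s = m := by
  have hlen : (stepWord σ).length = 2 * m := by simp [stepWord]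
  have h := count_take_stepWord σ s le_rfl
  rw [List.take_of_length_le hlen.le] at h
  have hodd := card_filter_odd_range_two_mul m
  have hsplit := card_filter_add_card_filter_not (s := range (2 * m)) (p := (Odd ·))
  rcases s.dichotomy with rfl | rfl
  · simp only [stepOf_eq_U, card_filter_ent_inv σ (Odd ·)] at h
    omega
  · simp only [stepOf_eq_D, card_filter_ent_inv σ (¬Odd ·)] at h
    simp only [card_range] at hsplit
    omega

lemma DownUp.card_take_D_le_U {m : ℕ} {σ : Perm (Fin (2 * m))} (hd : DownUp σ) {i : ℕ}
    (hi : i ≤ 2 * m) : #{v ∈ range i | stepOf σ v = D} ≤ #{v ∈ range i | stepOf σ v = U} := by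
  -- each peak is matched with the valley that follows it, which is smaller
  have hpeak : ∀ v, v < i → ¬Odd (ent σ⁻¹ v) →
      ∃ k, ent σ⁻¹ v = 2 * k ∧ 2 * k + 1 < 2 * m ∧ ent σ (2 * k) = v := fun v hv hpos => by
    obtain ⟨k, hk⟩ := Nat.not_odd_iff_even.mp hpos
    have := ent_lt σ⁻¹ (show v < 2 * m by omega)
    exact ⟨k, by omega, by omega, by rw [← two_mul] at hk; rw [← hk, ent_ent_inv σ (by omega)]⟩
  refine card_le_card_of_injOn (fun v => ent σ (ent σ⁻¹ v + 1)) (fun v hv => ?_)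
    (fun v hv w hw hvw => ?_)
  · simp only [mem_coe, mem_filter, mem_range, stepOf_eq_U, stepOf_eq_D] at hv ⊢
    obtain ⟨k, hk, hkm, hkv⟩ := hpeak v hv.1 hv.2
    have := hd.valley_lt_peak hkm
    rw [hk, ent_inv_ent σ hkm]
    exact ⟨by omega, ⟨k, rfl⟩⟩
  · simp only [mem_coe, mem_filter, mem_range, stepOf_eq_D] at hv hw
    obtain ⟨k, hk, hkm, hkv⟩ := hpeak v hv.1 hv.2
    obtain ⟨l, hl, hlm, hlw⟩ := hpeak w hw.1 hw.2
    dsimp only at hvw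
    rw [hk, hl] at hvw
    have := ent_inj σ hkm hlm hvw
    rw [← hkv, ← hlw, show k = l by omega]

def DownUp.dyckWord {m : ℕ} {σ : Perm (Fin (2 * m))} (hd : DownUp σ) : DyckWord where
  toList := stepWord σ
  count_U_eq_count_D := by rw [count_stepWord, count_stepWord]
  count_D_le_count_U i := by
    have hlen : (stepWord σ).length = 2 * m := by simp [stepWord]
    rw [List.take_eq_take_min, hlen, count_take_stepWord σ _ (min_le_right _ _),
      count_take_stepWord σ _ (min_le_right _ _)]
    exact hd.card_take_D_le_U (min_le_right _ _)

lemma DownUp.semilength_dyckWord {m : ℕ} {σ : Perm (Fin (2 * m))} (hd : DownUp σ) :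
    hd.dyckWord.semilength = m :=
  count_stepWord σ U

namespace IsMinimalDownUp

lemma peak_lt_next_peak (hσ : IsMinimalDownUp σ) {k : ℕ} (h : 2 * k + 2 < n) :
    ent σ (2 * k) < ent σ (2 * k + 2) := by
  have hasc := hσ.1.valley_lt_next_peak h
  have hne : ent σ (2 * k + 2) ≠ ent σ (2 * k) := fun he =>
    absurd (ent_inj σ h (by omega) he) (by omega)
  have := hσ.2 k (2 * k + 2) (by omega) h
  omega

lemma peak_lt_peak (hσ : IsMinimalDownUp σ) {k t : ℕ} (hkt : k < t) (ht : 2 * t < n) :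
    ent σ (2 * k) < ent σ (2 * t) := by
  induction t with
  | zero => omega
  | succ t ih =>
    have hstep := hσ.peak_lt_next_peak (k := t) (by omega)
    rcases eq_or_lt_of_le (Nat.le_of_lt_succ hkt) with rfl | hkt
    · exact hstep
    · exact (ih hkt (by omega)).trans hstep

lemma valley_lt_valley (hσ : IsMinimalDownUp σ) {k t : ℕ} (hkt : k < t) (ht : 2 * t + 1 < n)
    (hlt : ent σ (2 * t + 1) < ent σ (2 * k)) : ent σ (2 * t + 1) < ent σ (2 * k + 1) := by
  have hne : ent σ (2 * t + 1) ≠ ent σ (2 * k + 1) := fun he =>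
    absurd (ent_inj σ ht (by omega) he) (by omega)
  have := hσ.2 k (2 * t + 1) (by omega) ht
  omega

lemma isLeast_peak (hσ : IsMinimalDownUp σ) {k : ℕ} (hk : 2 * k < n) :
    IsLeast {v | v < n ∧ stepOf σ v = D ∧ ∀ t < k, ent σ (2 * t) ≠ v} (ent σ (2 * k)) := by
  refine ⟨⟨ent_lt σ hk, ?_, fun t ht he => ?_⟩, fun v ⟨hv, hstep, hne⟩ => ?_⟩
  · rw [stepOf_eq_D, ent_inv_ent σ hk]
    simp [parity_simps]
  · exact absurd (ent_inj σ (by omega) hk he) (by omega)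
  · rw [stepOf_eq_D, Nat.not_odd_iff_even] at hstep
    obtain ⟨t, ht⟩ := hstep
    have hpos := ent_lt σ⁻¹ hv
    have hvt : ent σ (2 * t) = v := by rw [two_mul, ← ht, ent_ent_inv σ hv]
    rcases lt_trichotomy t k with htk | rfl | hkt
    · exact absurd hvt (hne t htk)
    · exact hvt.le
    · exact hvt ▸ (hσ.peak_lt_peak hkt (by omega)).le

lemma isGreatest_valley (hσ : IsMinimalDownUp σ) {k : ℕ} (hk : 2 * k + 1 < n) :
    IsGreatest {v | v < n ∧ stepOf σ v = U ∧ v < ent σ (2 * k) ∧ ∀ t < k, ent σ (2 * t + 1) ≠ v}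
      (ent σ (2 * k + 1)) := by
  refine ⟨⟨ent_lt σ hk, ?_, hσ.1.valley_lt_peak hk, fun t ht he => ?_⟩,
    fun v ⟨hv, hstep, hlt, hne⟩ => ?_⟩
  · rw [stepOf_eq_U, ent_inv_ent σ hk]
    exact ⟨k, rfl⟩
  · exact absurd (ent_inj σ (by omega) hk he) (by omega)
  · rw [stepOf_eq_U] at hstep
    obtain ⟨t, ht⟩ := hstep
    have hpos := ent_lt σ⁻¹ hv
    have hvt : ent σ (2 * t + 1) = v := by rw [← ht, ent_ent_inv σ hv]
    rcases lt_trichotomy t k with htk | rfl | hkt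
    · exact absurd hvt (hne t htk)
    · exact hvt.ge
    · exact hvt ▸ (hσ.valley_lt_valley hkt (by omega) (hvt ▸ hlt)).le

theorem eq_of_stepOf_eq {σ τ : Perm (Fin n)} (hσ : IsMinimalDownUp σ)
    (hτ : IsMinimalDownUp τ) (h : ∀ v < n, stepOf σ v = stepOf τ v) : σ = τ := by
  refine perm_ext_ent fun i => ?_
  induction i using Nat.strong_induction_on with
  | _ i ih =>
    intro hi
    obtain ⟨k, rfl | rfl⟩ := Nat.even_or_odd' i
    · have hS : {v | v < n ∧ stepOf σ v = D ∧ ∀ t < k, ent σ (2 * t) ≠ v}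
          = {v | v < n ∧ stepOf τ v = D ∧ ∀ t < k, ent τ (2 * t) ≠ v} :=
        Set.ext fun v => and_congr_right fun hv => by
          rw [h v hv]
          exact and_congr_right fun _ => forall₂_congr fun t ht => by
            rw [ih (2 * t) (by omega) (by omega)]
      exact (hσ.isLeast_peak hi).unique (hS ▸ hτ.isLeast_peak hi)
    · have hS : {v | v < n ∧ stepOf σ v = U ∧ v < ent σ (2 * k) ∧ ∀ t < k, ent σ (2 * t + 1) ≠ v}
          = {v | v < n ∧ stepOf τ v = U ∧ v < ent τ (2 * k) ∧ ∀ t < k, ent τ (2 * t + 1) ≠ v} :=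
        Set.ext fun v => and_congr_right fun hv => by
          rw [h v hv, ih (2 * k) (by omega) (by omega)]
          exact and_congr_right fun _ => and_congr_right fun _ => forall₂_congr fun t ht => by
            rw [ih (2 * t + 1) (by omega) (by omega)]
      exact (hσ.isGreatest_valley hi).unique (hS ▸ hτ.isGreatest_valley hi)

end IsMinimalDownUp

section Glue

variable {a b : ℕ} (σ₁ : Perm (Fin (2 * a))) (σ₂ : Perm (Fin (2 * b)))

def glueEnt (i : ℕ) : ℕ :=
  if i < 2 * a then ent σ₁ i + 1 else if i = 2 * a then 2 * a + 1 else if i = 2 * a + 1 then 0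
  else ent σ₂ (i - (2 * a + 2)) + (2 * a + 2)

lemma glueEnt_of_lt {i : ℕ} (h : i < 2 * a) : glueEnt σ₁ σ₂ i = ent σ₁ i + 1 := if_pos h

lemma glueEnt_peak : glueEnt σ₁ σ₂ (2 * a) = 2 * a + 1 := by simp [glueEnt]

lemma glueEnt_valley : glueEnt σ₁ σ₂ (2 * a + 1) = 0 := by simp [glueEnt]

lemma glueEnt_add (j : ℕ) : glueEnt σ₁ σ₂ (2 * a + 2 + j) = ent σ₂ j + (2 * a + 2) := by
  rw [glueEnt, if_neg (by omega), if_neg (by omega), if_neg (by omega), Nat.add_sub_cancel_left]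

lemma glueEnt_cases {i : ℕ} (hi : i < 2 * (a + b + 1)) :
    (i < 2 * a ∧ glueEnt σ₁ σ₂ i = ent σ₁ i + 1) ∨ (i = 2 * a ∧ glueEnt σ₁ σ₂ i = 2 * a + 1) ∨
      (i = 2 * a + 1 ∧ glueEnt σ₁ σ₂ i = 0) ∨
      ∃ j < 2 * b, i = 2 * a + 2 + j ∧ glueEnt σ₁ σ₂ i = ent σ₂ j + (2 * a + 2) := by
  rcases lt_trichotomy i (2 * a) with h | rfl | h
  · exact Or.inl ⟨h, glueEnt_of_lt σ₁ σ₂ h⟩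
  · exact Or.inr (Or.inl ⟨rfl, glueEnt_peak σ₁ σ₂⟩)
  · rcases eq_or_lt_of_le (Nat.succ_le_of_lt h) with rfl | h
    · exact Or.inr (Or.inr (Or.inl ⟨rfl, glueEnt_valley σ₁ σ₂⟩))
    · obtain ⟨j, rfl⟩ := Nat.exists_eq_add_of_le (Nat.succ_le_of_lt h)
      exact Or.inr (Or.inr (Or.inr ⟨j, by omega, by omega, glueEnt_add σ₁ σ₂ j⟩))

lemma glueEnt_lt {i : ℕ} (hi : i < 2 * (a + b + 1)) : glueEnt σ₁ σ₂ i < 2 * (a + b + 1) := by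
  rcases glueEnt_cases σ₁ σ₂ hi with ⟨h, he⟩ | ⟨-, he⟩ | ⟨-, he⟩ | ⟨j, hj, -, he⟩ <;> rw [he]
  · have := ent_lt σ₁ h; omega
  · omega
  · omega
  · have := ent_lt σ₂ hj; omega

lemma exists_glueEnt_eq {v : ℕ} (hv : v < 2 * (a + b + 1)) :
    ∃ i < 2 * (a + b + 1), glueEnt σ₁ σ₂ i = v := by
  rcases lt_trichotomy v (2 * a + 1) with h | rfl | h
  · rcases Nat.eq_zero_or_pos v with rfl | hpos
    · exact ⟨2 * a + 1, by omega, glueEnt_valley σ₁ σ₂⟩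
    · have hu : v - 1 < 2 * a := by omega
      have := ent_lt σ₁⁻¹ hu
      exact ⟨ent σ₁⁻¹ (v - 1), by omega, by rw [glueEnt_of_lt σ₁ σ₂ this, ent_ent_inv σ₁ hu]; omega⟩
  · exact ⟨2 * a, by omega, glueEnt_peak σ₁ σ₂⟩
  · obtain ⟨w, rfl⟩ := Nat.exists_eq_add_of_lt h
    have hw : w < 2 * b := by omega
    have := ent_lt σ₂⁻¹ hw
    exact ⟨2 * a + 2 + ent σ₂⁻¹ w, by omega, by rw [glueEnt_add, ent_ent_inv σ₂ hw]; ring⟩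

noncomputable def gluePerm : Perm (Fin (2 * (a + b + 1))) :=
  Equiv.ofBijective (fun i => ⟨glueEnt σ₁ σ₂ i, glueEnt_lt σ₁ σ₂ i.isLt⟩)
    (Finite.surjective_iff_bijective.mp fun v => by
      obtain ⟨i, hi, he⟩ := exists_glueEnt_eq σ₁ σ₂ v.isLt
      exact ⟨⟨i, hi⟩, Fin.ext he⟩)

lemma ent_gluePerm {i : ℕ} (h : i < 2 * (a + b + 1)) :
    ent (gluePerm σ₁ σ₂) i = glueEnt σ₁ σ₂ i := by
  rw [ent, dif_pos h, gluePerm, Equiv.ofBijective_apply]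

end Glue

section GlueMinimal

variable {a b : ℕ} {σ₁ : Perm (Fin (2 * a))} {σ₂ : Perm (Fin (2 * b))}

lemma DownUp.gluePerm (h₁ : DownUp σ₁) (h₂ : DownUp σ₂) : DownUp (gluePerm σ₁ σ₂) := by
  refine DownUp.of_pairs (fun k hk => ?_) (fun k hk => ?_) <;>
    rw [ent_gluePerm σ₁ σ₂ (by omega), ent_gluePerm σ₁ σ₂ (by omega)]
  · rcases lt_trichotomy k a with hka | rfl | hka
    · rw [glueEnt_of_lt σ₁ σ₂ (by omega), glueEnt_of_lt σ₁ σ₂ (by omega)]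
      exact Nat.succ_lt_succ (h₁.valley_lt_peak (by omega))
    · rw [glueEnt_valley, glueEnt_peak]
      omega
    · obtain ⟨k, rfl⟩ := Nat.exists_eq_add_of_lt hka
      rw [show 2 * (a + k + 1) + 1 = 2 * a + 2 + (2 * k + 1) by ring,
        show 2 * (a + k + 1) = 2 * a + 2 + 2 * k by ring, glueEnt_add, glueEnt_add]
      exact Nat.add_lt_add_right (h₂.valley_lt_peak (by omega)) _
  · rcases lt_trichotomy (k + 1) a with hka | hka | hka
    · rw [glueEnt_of_lt σ₁ σ₂ (by omega), glueEnt_of_lt σ₁ σ₂ (by omega)]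
      exact Nat.succ_lt_succ (h₁.valley_lt_next_peak (by omega))
    · rw [glueEnt_of_lt σ₁ σ₂ (by omega), show 2 * k + 2 = 2 * a by omega, glueEnt_peak]
      have := ent_lt σ₁ (i := 2 * k + 1) (by omega)
      omega
    · obtain ⟨k, rfl⟩ := Nat.exists_eq_add_of_le (Nat.le_of_lt_succ hka)
      rcases k with _ | k
      · rw [add_zero, glueEnt_valley, show 2 * a + 2 = 2 * a + 2 + 0 by rfl, glueEnt_add]
        omega
      · rw [show 2 * (a + (k + 1)) + 1 = 2 * a + 2 + (2 * k + 1) by ring,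
          show 2 * (a + (k + 1)) + 2 = 2 * a + 2 + (2 * k + 2) by ring, glueEnt_add, glueEnt_add]
        exact Nat.add_lt_add_right (h₂.valley_lt_next_peak (by omega)) _

lemma NoLaterEntryBetween.gluePerm (h₁ : NoLaterEntryBetween σ₁) (h₂ : NoLaterEntryBetween σ₂) :
    NoLaterEntryBetween (gluePerm σ₁ σ₂) := by
  intro k j hkj hj
  rw [ent_gluePerm σ₁ σ₂ (i := 2 * k + 1) (by omega), ent_gluePerm σ₁ σ₂ (i := 2 * k) (by omega),
    ent_gluePerm σ₁ σ₂ hj]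
  rcases lt_trichotomy k a with hka | rfl | hka
  · rw [glueEnt_of_lt σ₁ σ₂ (i := 2 * k + 1) (by omega),
      glueEnt_of_lt σ₁ σ₂ (i := 2 * k) (by omega)]
    have := ent_lt σ₁ (i := 2 * k) (by omega)
    rcases glueEnt_cases σ₁ σ₂ hj with ⟨hj, he⟩ | ⟨-, he⟩ | ⟨-, he⟩ | ⟨_, _, _, he⟩ <;> rw [he]
    · have := h₁ k j hkj hj
      omega
    all_goals omega
  · rw [glueEnt_valley, glueEnt_peak]
    obtain ⟨j, rfl⟩ := Nat.exists_eq_add_of_lt hkj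
    rw [show 2 * k + 1 + j + 1 = 2 * k + 2 + j by ring, glueEnt_add]
    omega
  · obtain ⟨k, rfl⟩ := Nat.exists_eq_add_of_lt hka
    obtain ⟨j, rfl⟩ := Nat.exists_eq_add_of_lt hkj
    rw [show 2 * (a + k + 1) + 1 = 2 * a + 2 + (2 * k + 1) by ring,
      show 2 * (a + k + 1) = 2 * a + 2 + 2 * k by ring,
      show 2 * a + 2 + (2 * k + 1) + j + 1 = 2 * a + 2 + (2 * k + 1 + j + 1) by ring,
      glueEnt_add, glueEnt_add, glueEnt_add]
    have := h₂ k (2 * k + 1 + j + 1) (by omega) (by omega)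
    omega

lemma stepOf_gluePerm_glueEnt {i : ℕ} (hi : i < 2 * (a + b + 1)) :
    stepOf (gluePerm σ₁ σ₂) (glueEnt σ₁ σ₂ i) = if Odd i then U else D := by
  rw [stepOf, ← ent_gluePerm σ₁ σ₂ hi, ent_inv_ent _ hi]

lemma stepWord_gluePerm : stepWord (gluePerm σ₁ σ₂) = U :: (stepWord σ₁ ++ D :: stepWord σ₂) := by
  rw [stepWord, show List.range (2 * (a + b + 1)) = List.range (1 + 2 * a + 1 + 2 * b) by
    congr 1; ring, List.range_add, List.range_add, List.range_add]
  simp only [List.map_append, List.map_map, List.range_one, List.map_cons, List.map_nil, stepWord,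
    Function.comp_def]
  have hstep := fun i (hi : i < 2 * (a + b + 1)) =>
    stepOf_gluePerm_glueEnt (σ₁ := σ₁) (σ₂ := σ₂) hi
  have h0 : stepOf (gluePerm σ₁ σ₂) 0 = U := by
    simpa [glueEnt_valley] using hstep (2 * a + 1) (by omega)
  have hpeak : stepOf (gluePerm σ₁ σ₂) (1 + 2 * a + 0) = D := by
    have hodd : ¬Odd (2 * a) := by simp [Nat.odd_iff]
    simpa [glueEnt_peak, add_comm, hodd] using hstep (2 * a) (by omega)
  have h₁ : ∀ u ∈ List.range (2 * a), stepOf (gluePerm σ₁ σ₂) (1 + u) = stepOf σ₁ u := by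
    intro u hu
    have hu := List.mem_range.mp hu
    have hpos := ent_lt σ₁⁻¹ hu
    simpa [glueEnt_of_lt σ₁ σ₂ hpos, ent_ent_inv σ₁ hu, add_comm, stepOf] using
      hstep _ (by omega : ent σ₁⁻¹ u < _)
  have h₂ : ∀ w ∈ List.range (2 * b),
      stepOf (gluePerm σ₁ σ₂) (1 + 2 * a + 1 + w) = stepOf σ₂ w := by
    intro w hw
    have hw := List.mem_range.mp hw
    have hpos := ent_lt σ₂⁻¹ hw
    have := hstep (2 * a + 2 + ent σ₂⁻¹ w) (by omega)
    rw [glueEnt_add, ent_ent_inv σ₂ hw] at this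
    have hpar : Odd (2 * a + 2 + ent σ₂⁻¹ w) ↔ Odd (ent σ₂⁻¹ w) := by
      simp only [Nat.odd_iff]; omega
    rw [show 1 + 2 * a + 1 + w = w + (2 * a + 2) by ring, this, stepOf]
    simp only [hpar]
  rw [List.map_congr_left h₁, List.map_congr_left h₂, h0, hpeak]
  simp

end GlueMinimal

theorem exists_isMinimalDownUp_stepWord_eq (M : ℕ) :
    ∀ p : DyckWord, p.semilength = M →
      ∃ σ : Perm (Fin (2 * M)), IsMinimalDownUp σ ∧ stepWord σ = p.toList := by
  induction M using Nat.strong_induction_on with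
  | _ M ih =>
    intro p hp
    rcases eq_or_ne p 0 with rfl | h0
    · subst hp
      exact ⟨1, ⟨fun i hi => by simp at hi, fun k j _ hj => by simp at hj⟩, rfl⟩
    · have hM := DyckWord.semilength_insidePart_add_semilength_outsidePart_add_one h0
      obtain ⟨σ₁, h₁, hw₁⟩ := ih _ (by omega) p.insidePart rfl
      obtain ⟨σ₂, h₂, hw₂⟩ := ih _ (by omega) p.outsidePart rfl
      subst hp
      rw [← hM]
      refine ⟨gluePerm σ₁ σ₂, ⟨h₁.1.gluePerm h₂.1, h₁.2.gluePerm h₂.2⟩, ?_⟩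
      conv_rhs => rw [← DyckWord.nest_insidePart_add_outsidePart h0]
      rw [stepWord_gluePerm, hw₁, hw₂]
      show _ = [U] ++ p.insidePart.toList ++ [D] ++ p.outsidePart.toList
      simp

theorem card_isMinimalDownUp_even (m : ℕ) :
    #{σ : Perm (Fin (2 * m)) | IsMinimalDownUp σ} = catalan m := by
  rw [← DyckWord.card_dyckWord_semilength_eq_catalan, ← card_univ]
  refine card_bij (fun σ hσ => ⟨(mem_filter.mp hσ).2.1.dyckWord, DownUp.semilength_dyckWord _⟩)
    (fun _ _ => mem_univ _) (fun σ hσ τ hτ he => ?_) (fun ⟨p, hp⟩ _ => ?_)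
  · refine (mem_filter.mp hσ).2.eq_of_stepOf_eq (mem_filter.mp hτ).2 fun v hv => ?_
    have hw : stepWord σ = stepWord τ := congrArg (fun p => p.1.toList) he
    exact List.map_inj_left.mp hw v (List.mem_range.mpr hv)
  · obtain ⟨σ, hσ, hw⟩ := exists_isMinimalDownUp_stepWord_eq m p hp
    exact ⟨σ, mem_filter.mpr ⟨mem_univ _, hσ⟩, Subtype.ext (DyckWord.ext hw)⟩

theorem card_isMinimalDownUp (n : ℕ) :
    #{σ : Perm (Fin n) | IsMinimalDownUp σ} = catalan (n / 2) := by
  obtain ⟨m, rfl | rfl⟩ := Nat.even_or_odd' n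
  · rw [card_isMinimalDownUp_even, Nat.mul_div_cancel_left m two_pos]
  · rw [card_isMinimalDownUp_odd, card_isMinimalDownUp_even]
    congr 1
    omega

lemma catalan_pos (m : ℕ) : 0 < catalan m :=
  Nat.pos_of_mul_pos_left ((succ_mul_catalan_eq_centralBinom m).symm ▸ Nat.centralBinom_pos m)

theorem stmt16 (n : ℕ) :
    (∀ σ : Equiv.Perm (Fin n), DownUp σ → n ^ 2 / 4 ≤ altInv σ) ∧
    (∃ σ : Equiv.Perm (Fin n), DownUp σ ∧ altInv σ = n ^ 2 / 4) ∧
    ((Finset.univ : Finset (Equiv.Perm (Fin n))).filter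
        (fun σ => DownUp σ ∧ altInv σ = n ^ 2 / 4)).card = catalan (n / 2) := by
  have hcard : #{σ : Perm (Fin n) | DownUp σ ∧ altInv σ = n ^ 2 / 4} = catalan (n / 2) := by
    simp only [downUp_and_altInv_eq_iff, card_isMinimalDownUp]
  obtain ⟨σ, hσ⟩ := card_pos.mp (hcard ▸ catalan_pos (n / 2))
  exact ⟨fun σ hd => altInv_eq_of_downUp hd ▸ Nat.le_add_right _ _, ⟨σ, (mem_filter.mp hσ).2⟩,
    hcard⟩
end

section
/- A permutation σ of [n] is down-up alternating if and only if its alternating inversion code ĉode(σ) = (ĉ₁,...,ĉ_{n−1}) satisfies ĉᵢ + ĉᵢ₊₁ ≥ n − i for all 1 ≤ i ≤ n−2, and σ is up-down alternating if and only if ĉᵢ + ĉᵢ₊₁ ≤ n−1−i for all 1 ≤ i ≤ n−2. -/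
open Finset
open scoped Classical

lemma ent_ne {n : ℕ} (σ : Equiv.Perm (Fin n)) {j k : ℕ} (hj : j < n) (hk : k < n)
    (hjk : j ≠ k) : ent σ j ≠ ent σ k := by
  simp only [ent, dif_pos hj, dif_pos hk]
  intro hval
  apply hjk
  have : (⟨j, hj⟩ : Fin n) = ⟨k, hk⟩ := σ.injective (Fin.val_injective hval)
  exact congrArg Fin.val this

lemma card_filter_gt (n i : ℕ) :
    ((Finset.range n).filter (fun j => i < j)).card = n - (i + 1) := by
  have : (Finset.range n).filter (fun j => i < j) = Finset.Ico (i + 1) n := by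
    ext j
    simp only [Finset.mem_filter, Finset.mem_range, Finset.mem_Ico]
    omega
  rw [this, Nat.card_Ico]

lemma key_ge {n : ℕ} (σ : Equiv.Perm (Fin n)) (i : ℕ) (h : i + 1 < n)
    (hd : (Even i ∧ ent σ (i + 1) < ent σ i) ∨ (¬ Even i ∧ ent σ i < ent σ (i + 1))) :
    n - (i + 1) ≤ chat σ i + chat σ (i + 1) := by
  rw [← card_filter_gt n i, chat, chat, Finset.card_filter, Finset.card_filter,
    Finset.card_filter, ← Finset.sum_add_distrib]
  apply Finset.sum_le_sum
  intro j hj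
  rw [Finset.mem_range] at hj
  by_cases he : Even i
  · obtain ⟨-, hdesc⟩ | ⟨he', -⟩ := hd
    · have he1 : ¬ Even (i + 1) := by simp [Nat.even_add_one, he]
      simp only [he, he1, true_and, not_true_eq_false, false_and, or_false, false_or,
        not_false_eq_true]
      rcases Nat.lt_trichotomy j (i + 1) with hj3 | rfl | hj3 <;> split_ifs <;> omega
    · exact absurd he he'
  · obtain ⟨he', -⟩ | ⟨-, hdesc⟩ := hd
    · exact absurd he' he
    · have he1 : Even (i + 1) := by simpa [Nat.even_add_one] using he
      simp only [he, he1, true_and, not_true_eq_false, false_and, or_false, false_or,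
        not_false_eq_true]
      rcases Nat.lt_trichotomy j (i + 1) with hj3 | rfl | hj3 <;> split_ifs <;> omega

lemma key_le {n : ℕ} (σ : Equiv.Perm (Fin n)) (i : ℕ) (h : i + 1 < n)
    (hd : (Even i ∧ ent σ i < ent σ (i + 1)) ∨ (¬ Even i ∧ ent σ (i + 1) < ent σ i)) :
    chat σ i + chat σ (i + 1) ≤ n - 2 - i := by
  have h2 : n - 2 - i = n - (i + 1 + 1) := by omega
  rw [h2, ← card_filter_gt n (i + 1), chat, chat, Finset.card_filter, Finset.card_filter,
    Finset.card_filter, ← Finset.sum_add_distrib]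
  apply Finset.sum_le_sum
  intro j hj
  rw [Finset.mem_range] at hj
  by_cases he : Even i
  · obtain ⟨-, hdesc⟩ | ⟨he', -⟩ := hd
    · have he1 : ¬ Even (i + 1) := by simp [Nat.even_add_one, he]
      simp only [he, he1, true_and, not_true_eq_false, false_and, or_false, false_or,
        not_false_eq_true]
      rcases Nat.lt_trichotomy j (i + 1) with hj3 | rfl | hj3 <;> split_ifs <;> omega
    · exact absurd he he'
  · obtain ⟨he', -⟩ | ⟨-, hdesc⟩ := hd
    · exact absurd he' he
    · have he1 : Even (i + 1) := by simpa [Nat.even_add_one] using he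
      simp only [he, he1, true_and, not_true_eq_false, false_and, or_false, false_or,
        not_false_eq_true]
      rcases Nat.lt_trichotomy j (i + 1) with hj3 | rfl | hj3 <;> split_ifs <;> omega

theorem stmt19 (n : ℕ) (σ : Equiv.Perm (Fin n)) :
    (DownUp σ ↔ ∀ i, i + 1 < n → n - (i + 1) ≤ chat σ i + chat σ (i + 1)) ∧
    (UpDown σ ↔ ∀ i, i + 1 < n → chat σ i + chat σ (i + 1) ≤ n - 2 - i) := by
  constructor
  · constructor
    · intro hd i hi
      exact key_ge σ i hi (hd i (Finset.mem_range.mpr (by omega)))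
    · intro H i hi
      rw [Finset.mem_range] at hi
      have hi' : i + 1 < n := by omega
      have hne : ent σ i ≠ ent σ (i + 1) := ent_ne σ (by omega) hi' (by omega)
      have hH := H i hi'
      by_cases he : Even i
      · refine Or.inl ⟨he, ?_⟩
        by_contra hlt
        have := key_le σ i hi' (Or.inl ⟨he, by omega⟩)
        omega
      · refine Or.inr ⟨he, ?_⟩
        by_contra hlt
        have := key_le σ i hi' (Or.inr ⟨he, by omega⟩)
        omega
  · constructor
    · intro hu i hi
      exact key_le σ i hi (hu i (Finset.mem_range.mpr (by omega)))
    · intro H i hi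
      rw [Finset.mem_range] at hi
      have hi' : i + 1 < n := by omega
      have hne : ent σ i ≠ ent σ (i + 1) := ent_ne σ (by omega) hi' (by omega)
      have hH := H i hi'
      by_cases he : Even i
      · refine Or.inl ⟨he, ?_⟩
        by_contra hlt
        have := key_ge σ i hi' (Or.inl ⟨he, by omega⟩)
        omega
      · refine Or.inr ⟨he, ?_⟩
        by_contra hlt
        have := key_ge σ i hi' (Or.inr ⟨he, by omega⟩)
        omega
end
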